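/- The packing bound function cov does not come from a sandwich function: there is no sandwich function Ψ such that cov(C) = Ψ(G(C)) for every bounded Borel subset C of every ℝ^d, where G(C) is the graph with vertex set C and an edge between distinct x, y ∈ C exactly when |x − y| ≥ 2. (Indeed, if C consists of the three vertices of an equilateral triangle in ℝ^2 with side length strictly between √3 and 2, then G(C) has no edges, so any sandwich function gives value at most χ(G(C)) = 1, while cov(C) ≥ 2.) -/

import Mathlib

open scoped Pointwise
open MeasureTheory Bornology Filter

/-- `cov C` is the smallest number of open unit balls (centered anywhere) needed to cover `C`. -/
noncomputable def cov (d : ℕ) (C : Set (EuclideanSpace ℝ (Fin d))) : ℕ :=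
  sInf {m : ℕ | ∃ X : Finset (EuclideanSpace ℝ (Fin d)),
    X.card = m ∧ C ⊆ ⋃ x ∈ X, Metric.ball x 1}

/-- The join `G * H` of two graphs: the disjoint union of `G` and `H` together with all
edges between the two parts. -/
def graphJoin {V W : Type} (G : SimpleGraph V) (H : SimpleGraph W) :
    SimpleGraph (V ⊕ W) where
  Adj x y := match x, y with
    | Sum.inl a, Sum.inl b => G.Adj a b
    | Sum.inr a, Sum.inr b => H.Adj a b
    | Sum.inl _, Sum.inr _ => True
    | Sum.inr _, Sum.inl _ => True
  symm := ⟨fun x y => match x, y with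
    | Sum.inl _, Sum.inl _ => fun h => G.adj_symm h
    | Sum.inr _, Sum.inr _ => fun h => H.adj_symm h
    | Sum.inl _, Sum.inr _ => fun _ => trivial
    | Sum.inr _, Sum.inl _ => fun _ => trivial⟩
  loopless := ⟨fun x => by cases x <;> simp⟩

/-- A sandwich function: an assignment of a nonnegative real number to every graph with
finite chromatic number, taking the value `0` on empty graphs and `1` on one-point graphs,
monotone under graph homomorphisms, and additive under joins. -/
structure SandwichFunction where
  toFun : ∀ {V : Type}, SimpleGraph V → ℝ
  nonneg : ∀ {V : Type} (G : SimpleGraph V), G.chromaticNumber ≠ ⊤ → 0 ≤ toFun G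
  empty_eq : ∀ {V : Type} (G : SimpleGraph V), IsEmpty V → toFun G = 0
  single_eq : ∀ {V : Type} (G : SimpleGraph V), Nonempty V → Subsingleton V → toFun G = 1
  mono : ∀ {V W : Type} (G : SimpleGraph V) (H : SimpleGraph W),
    G.chromaticNumber ≠ ⊤ → H.chromaticNumber ≠ ⊤ → (G →g H) → toFun G ≤ toFun H
  join_add : ∀ {V W : Type} (G : SimpleGraph V) (H : SimpleGraph W),
    G.chromaticNumber ≠ ⊤ → H.chromaticNumber ≠ ⊤ →
    toFun (graphJoin G H) = toFun G + toFun H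

/-- The graph on a subset `C` of a metric space whose edges are the pairs of (distinct)
points at distance at least 2. -/
def farGraph {E : Type} [MetricSpace E] (C : Set E) : SimpleGraph C where
  Adj x y := x ≠ y ∧ 2 ≤ dist (x : E) (y : E)
  symm := ⟨fun x y h => ⟨h.1.symm, by rw [dist_comm]; exact h.2⟩⟩
  loopless := ⟨fun x h => h.1 rfl⟩

/-! A graph without edges maps homomorphically to the one-vertex graph, so every sandwich
function is at most 1 on it. The half-open segment `[0, 2)` on the line has no two points at
distance 2, hence an edgeless graph, yet no open unit ball contains it, so it needs two balls. -/

namespace SandwichFunction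

theorem toFun_bot_le_one (Ψ : SandwichFunction) (V : Type) :
    Ψ.toFun (⊥ : SimpleGraph V) ≤ 1 := by
  have hbot : ∀ W : Type, (⊥ : SimpleGraph W).chromaticNumber ≠ ⊤ := fun _ =>
    SimpleGraph.chromaticNumber_ne_top_iff_exists.mpr ⟨1, SimpleGraph.colorable_one_iff.mpr rfl⟩
  calc Ψ.toFun (⊥ : SimpleGraph V)
      ≤ Ψ.toFun (⊥ : SimpleGraph Unit) :=
        Ψ.mono _ _ (hbot V) (hbot Unit) ⟨fun _ => (), id⟩
    _ = 1 := Ψ.single_eq _ inferInstance inferInstance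

end SandwichFunction

theorem farGraph_eq_bot {E : Type} [MetricSpace E] {C : Set E}
    (hC : ∀ x ∈ C, ∀ y ∈ C, dist x y < 2) : farGraph C = ⊥ := by
  ext x y
  simpa [farGraph] using fun _ => hC x x.2 y y.2

section cov

variable {d : ℕ} {C : Set (EuclideanSpace ℝ (Fin d))}

theorem isBounded_of_subset_biUnion_ball (X : Finset (EuclideanSpace ℝ (Fin d)))
    (hX : C ⊆ ⋃ x ∈ X, Metric.ball x 1) : IsBounded C :=
  ((isBounded_biUnion_finset X).mpr fun _ _ => Metric.isBounded_ball).subset hX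

theorem two_le_cov_of_not_subset_ball (X : Finset (EuclideanSpace ℝ (Fin d)))
    (hX : C ⊆ ⋃ x ∈ X, Metric.ball x 1) (hne : C.Nonempty)
    (hball : ∀ c, ¬ C ⊆ Metric.ball c 1) : 2 ≤ cov d C := by
  have hmem : cov d C ∈ {m : ℕ | ∃ Y : Finset (EuclideanSpace ℝ (Fin d)),
      Y.card = m ∧ C ⊆ ⋃ y ∈ Y, Metric.ball y 1} := Nat.sInf_mem ⟨_, X, rfl, hX⟩
  obtain ⟨Y, hcard, hY⟩ := hmem
  by_contra! hlt
  interval_cases cov d C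
  · obtain ⟨x, hx⟩ := hne
    simpa [Finset.card_eq_zero.mp hcard] using hY hx
  · obtain ⟨c, rfl⟩ := Finset.card_eq_one.mp hcard
    exact hball c (by simpa using hY)

end cov

theorem EuclideanSpace.dist_eq_abs_sub_fin_one (x y : EuclideanSpace ℝ (Fin 1)) :
    dist x y = |x 0 - y 0| := by
  simp [EuclideanSpace.dist_eq, Real.sqrt_sq_eq_abs, Real.dist_eq]

def halfOpenSegment : Set (EuclideanSpace ℝ (Fin 1)) := {x | x 0 ∈ Set.Ico 0 2}

theorem measurableSet_halfOpenSegment : MeasurableSet halfOpenSegment :=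
  measurableSet_Ico.preimage (EuclideanSpace.proj (0 : Fin 1)).continuous.measurable

theorem dist_lt_two_of_mem_halfOpenSegment :
    ∀ x ∈ halfOpenSegment, ∀ y ∈ halfOpenSegment, dist x y < 2 := by
  rintro x ⟨hx₀, hx₂⟩ y ⟨hy₀, hy₂⟩
  rw [EuclideanSpace.dist_eq_abs_sub_fin_one, abs_lt]
  constructor <;> linarith

theorem halfOpenSegment_subset_biUnion_ball :
    halfOpenSegment ⊆ ⋃ x ∈ ({EuclideanSpace.single 0 (1 / 2),
      EuclideanSpace.single 0 (3 / 2)} : Finset (EuclideanSpace ℝ (Fin 1))), Metric.ball x 1 := by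
  rintro x ⟨hx₀, hx₂⟩
  simp only [Finset.mem_insert, Finset.mem_singleton, Set.iUnion_iUnion_eq_or_left,
    Set.iUnion_iUnion_eq_left, Set.mem_union, Metric.mem_ball,
    EuclideanSpace.dist_eq_abs_sub_fin_one, PiLp.single_apply, if_true, abs_lt]
  by_cases h : x 0 < 1
  · left; constructor <;> linarith
  · right; constructor <;> linarith

theorem not_halfOpenSegment_subset_ball (c : EuclideanSpace ℝ (Fin 1)) :
    ¬ halfOpenSegment ⊆ Metric.ball c 1 := by
  intro h
  have h₀ := h (show EuclideanSpace.single 0 0 ∈ halfOpenSegment by simp [halfOpenSegment])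
  simp only [Metric.mem_ball, EuclideanSpace.dist_eq_abs_sub_fin_one, PiLp.single_apply,
    if_true, abs_lt] at h₀
  -- `c 0 + 1` lies in `[0, 2)` at distance exactly 1 from `c`
  have h₁ := h (show EuclideanSpace.single 0 (c 0 + 1) ∈ halfOpenSegment by
    simp only [halfOpenSegment, Set.mem_ofPred_eq, PiLp.single_apply, if_true, Set.mem_Ico]
    constructor <;> linarith)
  simp [EuclideanSpace.dist_eq_abs_sub_fin_one] at h₁

/-- The function `cov` does not come from a sandwich function: there is
no sandwich function `Ψ` with `cov(C) = Ψ(G(C))` for all bounded Borel `C`, where `G(C)`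
is the graph on `C` whose edges are the pairs at distance at least 2. -/
theorem cov_not_from_sandwichFunction :
    ¬ ∃ Ψ : SandwichFunction, ∀ (d : ℕ) (C : Set (EuclideanSpace ℝ (Fin d))),
      IsBounded C → MeasurableSet C → (cov d C : ℝ) = Ψ.toFun (farGraph C) := by
  rintro ⟨Ψ, hΨ⟩
  have hcover := halfOpenSegment_subset_biUnion_ball
  have hcov : 2 ≤ cov 1 halfOpenSegment :=
    two_le_cov_of_not_subset_ball _ hcover
      ⟨EuclideanSpace.single 0 0, by simp [halfOpenSegment]⟩ not_halfOpenSegment_subset_ball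
  have hΨ_le : Ψ.toFun (farGraph halfOpenSegment) ≤ 1 :=
    farGraph_eq_bot dist_lt_two_of_mem_halfOpenSegment ▸ Ψ.toFun_bot_le_one _
  rw [← hΨ 1 _ (isBounded_of_subset_biUnion_ball _ hcover)
    measurableSet_halfOpenSegment] at hΨ_le
  exact absurd hΨ_le (by norm_cast; omega)
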